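/- arXiv:1306.4032 — 6 statements merged into one kernel-verified Lean document; each statement's English description precedes it below -/
import Mathlib

section
/- Let (α_k)_{k≥0} be a real sequence with ∑_{k≥0} |α_k| < ∞, and let τ be a random time taking values in the nonnegative integers with p_n := P(τ ≥ n) > 0 for all n and lim_{n→∞} p_n = 0. Define weighted partial sums S_0 = α_0 and S_k = α_0 + ∑_{j=1}^k α_j / p_j. Then the Russian roulette estimator Ŝ = S_τ has finite expectation and E[Ŝ] = ∑_{k≥0} α_k. -/
open MeasureTheory Filter

/-- Russian roulette estimator is unbiased with finite expectation. -/
theorem russian_roulette_unbiased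
    {Ω : Type*} [MeasurableSpace Ω] (μ : Measure Ω) [IsProbabilityMeasure μ]
    (τ : Ω → ℕ) (hτ : Measurable τ)
    (α : ℕ → ℝ) (hα : Summable (fun k => |α k|))
    (p : ℕ → ℝ) (hp : ∀ n, p n = (μ {ω | n ≤ τ ω}).toReal)
    (hppos : ∀ n, 0 < p n)
    (hplim : Tendsto p atTop (nhds 0))
    (S : ℕ → ℝ) (hS : ∀ k, S k = α 0 + ∑ j ∈ Finset.Icc 1 k, α j / p j) :
    Integrable (fun ω => S (τ ω)) μ ∧ ∫ ω, S (τ ω) ∂μ = ∑' k, α k := by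
  classical
  set f : ℕ → Ω → ℝ := fun j ω => Set.indicator {ω | j ≤ τ ω} (fun _ => α j / p j) ω with hf
  have hmeas : ∀ j, MeasurableSet {ω | j ≤ τ ω} := by
    intro j
    exact hτ (MeasurableSet.of_discrete)
  have hp0 : p 0 = 1 := by
    rw [hp 0]
    simp [Set.setOf_true]
  -- each f j is integrable with ∫ ‖f j‖ = |α j|
  have h1 : ∀ j, Integrable (f j) μ :=
    fun j => (integrable_const _).indicator (hmeas j)
  have hμfin : ∀ j, (μ {ω | j ≤ τ ω}).toReal = p j := fun j => (hp j).symm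
  have h2 : ∀ j, ∫ ω, ‖f j ω‖ ∂μ = |α j| := by
    intro j
    have : (fun ω => ‖f j ω‖) = Set.indicator {ω | j ≤ τ ω} (fun _ => |α j / p j|) := by
      funext ω
      simp [hf, Set.indicator, apply_ite norm, Real.norm_eq_abs, abs_div]
    rw [this, integral_indicator_const _ (hmeas j), smul_eq_mul, measureReal_def, hμfin j,
      abs_div, abs_of_pos (hppos j)]
    rw [mul_comm, div_mul_cancel₀ _ (hppos j).ne']
  -- pointwise identity
  have h3 : ∀ ω, S (τ ω) = ∑' j, f j ω := by
    intro ω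
    have hzero : ∀ j ∉ Finset.Iic (τ ω), f j ω = 0 := by
      intro j hj
      simp only [Finset.mem_Iic, not_le] at hj
      exact Set.indicator_of_notMem (by simpa using hj.not_ge) _
    rw [tsum_eq_sum hzero]
    have : ∀ j ∈ Finset.Iic (τ ω), f j ω = α j / p j := by
      intro j hj
      exact Set.indicator_of_mem (by simpa using Finset.mem_Iic.mp hj) _
    rw [Finset.sum_congr rfl this, hS]
    have : Finset.Iic (τ ω) = insert 0 (Finset.Icc 1 (τ ω)) := by
      ext j
      simp [Nat.le_iff_lt_or_eq, Nat.lt_one_iff, Nat.one_le_iff_ne_zero, or_comm]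
      omega
    rw [this, Finset.sum_insert (by simp), hp0]
    ring
  have hsummable : Summable fun j => ∫ ω, ‖f j ω‖ ∂μ := by
    have : (fun j => ∫ ω, ‖f j ω‖ ∂μ) = fun j => |α j| := funext h2
    rw [this]; exact hα
  -- integral value
  have hval : HasSum (fun j => ∫ ω, f j ω ∂μ) (∫ ω, (∑' j, f j ω) ∂μ) :=
    hasSum_integral_of_summable_integral_norm h1 hsummable
  have hintj : ∀ j, ∫ ω, f j ω ∂μ = α j := by
    intro j
    rw [hf]
    rw [integral_indicator_const _ (hmeas j), smul_eq_mul, measureReal_def, hμfin j,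
      mul_comm, div_mul_cancel₀ _ (hppos j).ne']
  simp only [hintj] at hval
  -- integrability
  have hintg : Integrable (fun ω => S (τ ω)) μ := by
    constructor
    · exact ((measurable_from_top : Measurable S).comp hτ).aestronglyMeasurable
    · show ∫⁻ ω, (‖S (τ ω)‖₊ : ENNReal) ∂μ < ⊤
      have hb : ∀ ω, (‖S (τ ω)‖₊ : ENNReal) ≤ ∑' j, (‖f j ω‖₊ : ENNReal) := by
        intro ω
        rw [h3 ω]
        have hsupp : ∀ j ∉ Finset.Iic (τ ω), f j ω = 0 := by
          intro j hj
          simp only [Finset.mem_Iic, not_le] at hj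
          exact Set.indicator_of_notMem (by simpa using hj.not_ge) _
        have hsumm : Summable fun j => ‖f j ω‖ :=
          summable_of_ne_finset_zero (s := Finset.Iic (τ ω))
            (fun j hj => by rw [hsupp j hj, norm_zero])
        calc (‖∑' j, f j ω‖₊ : ENNReal)
            ≤ ENNReal.ofReal (∑' j, ‖f j ω‖) := by
              rw [← enorm_eq_nnnorm, ← ofReal_norm]
              exact ENNReal.ofReal_le_ofReal (norm_tsum_le_tsum_norm hsumm)
          _ = ∑' j, (‖f j ω‖₊ : ENNReal) := by
              rw [ENNReal.ofReal_tsum_of_nonneg (fun j => norm_nonneg _) hsumm]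
              congr 1
              funext j
              rw [← enorm_eq_nnnorm, ← ofReal_norm, Real.norm_eq_abs]
      calc ∫⁻ ω, (‖S (τ ω)‖₊ : ENNReal) ∂μ
          ≤ ∫⁻ ω, ∑' j, (‖f j ω‖₊ : ENNReal) ∂μ := lintegral_mono hb
        _ = ∑' j, ∫⁻ ω, (‖f j ω‖₊ : ENNReal) ∂μ :=
            lintegral_tsum (fun j => ((h1 j).aestronglyMeasurable.enorm))
        _ = ∑' j, ENNReal.ofReal |α j| := by
            congr 1
            funext j
            rw [show ∫⁻ ω, (‖f j ω‖₊ : ENNReal) ∂μ = ENNReal.ofReal (∫ ω, ‖f j ω‖ ∂μ) from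
              (ofReal_integral_norm_eq_lintegral_enorm (h1 j)).symm, h2 j]
        _ = ENNReal.ofReal (∑' j, |α j|) :=
            (ENNReal.ofReal_tsum_of_nonneg (fun j => abs_nonneg _) hα).symm
        _ < ⊤ := ENNReal.ofReal_lt_top
  refine ⟨hintg, ?_⟩
  have : ∫ ω, S (τ ω) ∂μ = ∫ ω, (∑' j, f j ω) ∂μ := by
    congr 1
    funext ω
    exact h3 ω
  rw [this, ← hval.tsum_eq]
end

section
/- With the Russian roulette setup, if (α_n) is a sequence of nonnegative numbers and ∑_{n≥1} α_n S_{n−1} = ∞ (where S_k = α_0 + ∑_{j=1}^k α_j/p_j), then Var(S_τ) = ∞. -/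
open MeasureTheory Filter

/-- If the `α_n` are nonnegative and `∑ α_n S_{n-1} = ∞`, the Russian roulette
estimator has infinite variance (its second moment is not integrable). -/
theorem russian_roulette_infinite_variance
    {Ω : Type*} [MeasurableSpace Ω] (μ : Measure Ω) [IsProbabilityMeasure μ]
    (τ : Ω → ℕ) (hτ : Measurable τ)
    (α : ℕ → ℝ) (hα : Summable (fun k => |α k|)) (hnn : ∀ n, 0 ≤ α n)
    (p : ℕ → ℝ) (hp : ∀ n, p n = (μ {ω | n ≤ τ ω}).toReal)
    (hppos : ∀ n, 0 < p n)
    (hplim : Tendsto p atTop (nhds 0))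
    (S : ℕ → ℝ) (hS : ∀ k, S k = α 0 + ∑ j ∈ Finset.Icc 1 k, α j / p j)
    (hdiv : ¬ Summable (fun n => α (n + 1) * S n)) :
    ¬ Integrable (fun ω => (S (τ ω)) ^ 2) μ := by
  intro hint
  -- basic facts about S
  have hSstep : ∀ n, S (n + 1) = S n + α (n + 1) / p (n + 1) := by
    intro n
    rw [hS, hS, Finset.sum_Icc_succ_top (by omega : 1 ≤ n + 1)]
    ring
  have hSnn : ∀ n, 0 ≤ S n := by
    intro n
    induction n with
    | zero => rw [hS]; simp [hnn 0]
    | succ m ih =>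
      rw [hSstep]
      exact add_nonneg ih (div_nonneg (hnn _) (hppos _).le)
  have hSmono : Monotone S := by
    apply monotone_nat_of_le_succ
    intro n
    rw [hSstep]
    nlinarith [div_nonneg (hnn (n + 1)) (hppos (n + 1)).le]
  -- measurability of tail sets
  have msA : ∀ n : ℕ, MeasurableSet {ω | n ≤ τ ω} := fun n =>
    hτ measurableSet_Ici
  -- telescoping identity
  have tel : ∀ m : ℕ, S 0 ^ 2 + ∑ n ∈ Finset.Icc 1 m, (S n ^ 2 - S (n - 1) ^ 2)
      = S m ^ 2 := by
    intro m
    induction m with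
    | zero => simp
    | succ k ih =>
      rw [Finset.sum_Icc_succ_top (by omega : 1 ≤ k + 1)]
      simp only [Nat.add_sub_cancel]
      linarith
  set I := ∫ ω, (S (τ ω)) ^ 2 ∂μ with hI
  have hreind : ∀ M : ℕ, ∑ i ∈ Finset.range M, α (i + 1) * S i
      = ∑ n ∈ Finset.Icc 1 M, α n * S (n - 1) := by
    intro M
    induction M with
    | zero => simp
    | succ k ih =>
      rw [Finset.sum_range_succ, Finset.sum_Icc_succ_top (by omega : 1 ≤ k + 1), ih]
      simp
  -- main bound: partial sums are bounded by I
  have key : ∀ N : ℕ, ∑ i ∈ Finset.range N, α (i + 1) * S i ≤ I := by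
    intro N
    set g : Ω → ℝ := fun ω => S 0 ^ 2 + ∑ n ∈ Finset.Icc 1 N,
      Set.indicator {ω | n ≤ τ ω} (fun _ => S n ^ 2 - S (n - 1) ^ 2) ω with hg
    have hind : ∀ n : ℕ, Integrable
        ({ω | n ≤ τ ω}.indicator (fun _ => S n ^ 2 - S (n - 1) ^ 2)) μ := fun n =>
      (integrable_indicator_iff (msA n)).2
        (integrableOn_const (measure_lt_top μ _).ne)
    have hg_int : Integrable g μ :=
      (integrable_const _).add (integrable_finset_sum _ fun n _ => hind n)
    have hg_le : ∀ ω, g ω ≤ (S (τ ω)) ^ 2 := by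
      intro ω
      have hfil : (Finset.Icc 1 N).filter (fun n => n ≤ τ ω)
          = Finset.Icc 1 (min N (τ ω)) := by
        ext n
        simp only [Finset.mem_filter, Finset.mem_Icc, le_min_iff]
        omega
      have hgω : g ω = S (min N (τ ω)) ^ 2 := by
        rw [hg]
        simp only [Set.indicator_apply, Set.mem_setOf_eq]
        rw [← Finset.sum_filter, hfil]
        exact tel _
      rw [hgω]
      exact pow_le_pow_left₀ (hSnn _) (hSmono (min_le_right _ _)) 2
    have h1 : ∫ ω, g ω ∂μ ≤ I := integral_mono hg_int hint hg_le
    have h2 : ∫ ω, g ω ∂μ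
        = S 0 ^ 2 + ∑ n ∈ Finset.Icc 1 N, p n * (S n ^ 2 - S (n - 1) ^ 2) := by
      rw [hg]
      rw [integral_add (integrable_const _) (integrable_finset_sum _ fun n _ => hind n),
        integral_const, integral_finset_sum _ fun n _ => hind n]
      congr 1
      · simp
      · refine Finset.sum_congr rfl fun n _ => ?_
        rw [integral_indicator_const _ (msA n), measureReal_def, ← hp n, smul_eq_mul]
    have h3 : ∑ n ∈ Finset.Icc 1 N, α n * S (n - 1)
        ≤ ∑ n ∈ Finset.Icc 1 N, p n * (S n ^ 2 - S (n - 1) ^ 2) := by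
      refine Finset.sum_le_sum fun n hn => ?_
      obtain ⟨m, rfl⟩ : ∃ m, n = m + 1 := ⟨n - 1, by
        have := (Finset.mem_Icc.1 hn).1; omega⟩
      simp only [Nat.add_sub_cancel]
      have hpne := (hppos (m + 1)).ne'
      have hstep := hSstep m
      have hkey : p (m + 1) * (S (m + 1) ^ 2 - S m ^ 2)
          = α (m + 1) * (S (m + 1) + S m) := by
        rw [hstep]; field_simp; ring
      rw [hkey]
      nlinarith [mul_nonneg (hnn (m + 1)) (hSnn (m + 1)), hnn (m + 1), hSnn m,
        hSnn (m + 1), mul_nonneg (hnn (m + 1)) (hSnn m)]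
    have h4 := hreind N
    have h0 := sq_nonneg (S 0)
    linarith
  -- contradiction with divergence
  have hT : Tendsto (fun N => ∑ i ∈ Finset.range N, α (i + 1) * S i) atTop atTop := by
    refine (not_summable_iff_tendsto_nat_atTop_of_nonneg ?_).1 hdiv
    intro n
    exact mul_nonneg (hnn _) (hSnn _)
  obtain ⟨N, hN⟩ := (tendsto_atTop.1 hT (I + 1)).exists
  linarith [key N]
end

section
/- Let α ∈ (0,1), set α_k = α^k, and let τ = inf{k ≥ 1 : U_k ≥ q} − 1 for i.i.d. uniform(0,1) variables U_k and fixed q ∈ (0,1), so that p_n = P(τ ≥ n) = q^n. If α² < q then the Russian roulette estimator S_τ (with S_k = 1 + ∑_{j=1}^k α^j/q^j) has finite variance; if q < α² the variance is infinite. -/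
open MeasureTheory Filter

/-- Auxiliary: summability of `(n+1)^2 * c^n` for `0 ≤ c < 1`. -/
lemma aux_summable_sq_geom {c : ℝ} (hc0 : 0 ≤ c) (hc1 : c < 1) :
    Summable (fun n : ℕ => ((n : ℝ) + 1) ^ 2 * c ^ n) := by
  have hc : ‖c‖ < 1 := by rwa [Real.norm_eq_abs, abs_of_nonneg hc0]
  have h2 : Summable (fun n : ℕ => (n : ℝ) ^ 2 * c ^ n) :=
    summable_pow_mul_geometric_of_norm_lt_one 2 hc
  have h1 : Summable (fun n : ℕ => (n : ℝ) ^ 1 * c ^ n) :=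
    summable_pow_mul_geometric_of_norm_lt_one 1 hc
  have h0 : Summable (fun n : ℕ => c ^ n) := summable_geometric_of_norm_lt_one hc
  have := (h2.add ((h1.mul_left 2).add h0))
  refine this.congr fun n => ?_
  ring

/-- For the geometric sequence `α_k = α^k` truncated with geometric survival
probabilities `p_n = q^n`: finite variance if `α² < q`, infinite if `q < α²`. -/
theorem russian_roulette_geometric
    {Ω : Type*} [MeasurableSpace Ω] (μ : Measure Ω) [IsProbabilityMeasure μ]
    (τ : Ω → ℕ) (hτ : Measurable τ)
    (α q : ℝ) (hα : α ∈ Set.Ioo (0 : ℝ) 1) (hq : q ∈ Set.Ioo (0 : ℝ) 1)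
    (hp : ∀ n : ℕ, (μ {ω | n ≤ τ ω}).toReal = q ^ n)
    (S : ℕ → ℝ) (hS : ∀ k, S k = ∑ j ∈ Finset.range (k + 1), α ^ j / q ^ j) :
    (α ^ 2 < q → Integrable (fun ω => (S (τ ω)) ^ 2) μ) ∧
    (q < α ^ 2 → ¬ Integrable (fun ω => (S (τ ω)) ^ 2) μ) := by
  obtain ⟨hα0, hα1⟩ := hα
  obtain ⟨hq0, hq1⟩ := hq
  -- basic facts about S
  have hSrw : ∀ k, S k = ∑ j ∈ Finset.range (k + 1), (α / q) ^ j := by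
    intro k; rw [hS k]; exact Finset.sum_congr rfl fun j _ => (div_pow α q j).symm
  have hr0 : 0 ≤ α / q := le_of_lt (div_pos hα0 hq0)
  have hSnonneg : ∀ k, 0 ≤ S k := by
    intro k; rw [hSrw k]; exact Finset.sum_nonneg fun j _ => pow_nonneg hr0 j
  -- measure of survival sets
  have hμge : ∀ n : ℕ, μ {ω | n ≤ τ ω} = ENNReal.ofReal (q ^ n) := by
    intro n
    rw [← hp n, ENNReal.ofReal_toReal (measure_ne_top μ _)]
  have hmeas_ge : ∀ n : ℕ, MeasurableSet {ω | n ≤ τ ω} := by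
    intro n
    exact hτ (measurableSet_le measurable_const measurable_id)
  -- measure of the singleton level sets
  have hset : ∀ n : ℕ, {ω | τ ω = n} = {ω | n ≤ τ ω} \ {ω | n + 1 ≤ τ ω} := by
    intro n; ext ω; simp [Set.mem_diff, Nat.lt_succ_iff, Nat.le_antisymm_iff]
    omega
  have hμeq : ∀ n : ℕ, μ {ω | τ ω = n} = ENNReal.ofReal (q ^ n - q ^ (n + 1)) := by
    intro n
    have hsub : {ω | n + 1 ≤ τ ω} ⊆ {ω | n ≤ τ ω} :=
      fun ω hω => le_trans (Nat.le_succ n) hω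
    have hd := measure_diff (μ := μ) hsub (hmeas_ge (n + 1)).nullMeasurableSet
      (measure_ne_top μ _)
    rw [hset n, hd, hμge, hμge,
      ← ENNReal.ofReal_sub _ (pow_nonneg (le_of_lt hq0) (n + 1))]
  -- the key lintegral identity
  have hkey : (∫⁻ ω, (‖(S (τ ω)) ^ 2‖₊ : ENNReal) ∂μ)
      = ∑' n : ℕ, (‖(S n) ^ 2‖₊ : ENNReal) * μ {ω | τ ω = n} := by
    have hmg : Measurable (fun n : ℕ => (‖(S n) ^ 2‖₊ : ENNReal)) :=
      measurable_of_countable _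
    rw [show (∫⁻ ω, (‖(S (τ ω)) ^ 2‖₊ : ENNReal) ∂μ)
        = ∫⁻ n, (‖(S n) ^ 2‖₊ : ENNReal) ∂(μ.map τ) from (lintegral_map hmg hτ).symm,
      lintegral_countable']
    refine tsum_congr fun n => ?_
    rw [Measure.map_apply hτ (measurableSet_singleton n)]
    rfl
  have henorm : ∀ n : ℕ, (‖(S n) ^ 2‖₊ : ENNReal) = ENNReal.ofReal ((S n) ^ 2) := by
    intro n; exact Real.enorm_eq_ofReal (sq_nonneg _)
  constructor
  · -- finite variance case
    intro hlt
    have hmeasf : Measurable (fun ω => (S (τ ω)) ^ 2) :=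
      (measurable_of_countable (fun n => (S n) ^ 2)).comp hτ
    refine ⟨hmeasf.aestronglyMeasurable, ?_⟩
    rw [hasFiniteIntegral_def]
    change (∫⁻ ω, (‖(S (τ ω)) ^ 2‖₊ : ENNReal) ∂μ) < ⊤
    rw [hkey]
    set M : ℝ := max 1 (α / q) with hM
    have hM1 : 1 ≤ M := le_max_left _ _
    have hM0 : 0 ≤ M := le_trans zero_le_one hM1
    set c : ℝ := M ^ 2 * q with hc
    have hc0 : 0 ≤ c := mul_nonneg (sq_nonneg _) (le_of_lt hq0)
    have hc1 : c < 1 := by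
      rcases max_cases 1 (α / q) with ⟨h, _⟩ | ⟨h, _⟩
      · rw [hc, hM, h]; simpa using hq1
      · rw [hc, hM, h, div_pow]
        rw [div_mul_eq_mul_div, div_lt_one (pow_pos hq0 2)]
        calc α ^ 2 * q < q * q := by
              exact mul_lt_mul_of_pos_right hlt hq0
          _ = q ^ 2 := (sq q).symm
    -- bound S n ≤ (n+1) * M ^ n
    have hSle : ∀ n : ℕ, S n ≤ ((n : ℝ) + 1) * M ^ n := by
      intro n
      rw [hSrw n]
      have : ∀ j ∈ Finset.range (n + 1), (α / q) ^ j ≤ M ^ n := by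
        intro j hj
        calc (α / q) ^ j ≤ M ^ j :=
              pow_le_pow_left₀ hr0 (le_max_right 1 (α / q)) j
          _ ≤ M ^ n := pow_le_pow_right₀ hM1 (Nat.lt_succ_iff.mp (Finset.mem_range.mp hj))
      calc (∑ j ∈ Finset.range (n + 1), (α / q) ^ j)
          ≤ ∑ _j ∈ Finset.range (n + 1), M ^ n := Finset.sum_le_sum this
        _ = ((n : ℝ) + 1) * M ^ n := by
            rw [Finset.sum_const, Finset.card_range]
            push_cast; ring
    have hsummable : Summable (fun n : ℕ => ((n : ℝ) + 1) ^ 2 * c ^ n) :=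
      aux_summable_sq_geom hc0 hc1
    have hbound : ∀ n : ℕ, (‖(S n) ^ 2‖₊ : ENNReal) * μ {ω | τ ω = n}
        ≤ ENNReal.ofReal (((n : ℝ) + 1) ^ 2 * c ^ n) := by
      intro n
      have h1 : μ {ω | τ ω = n} ≤ ENNReal.ofReal (q ^ n) := by
        rw [← hμge n]
        exact measure_mono fun ω (hω : τ ω = n) => le_of_eq hω.symm
      calc (‖(S n) ^ 2‖₊ : ENNReal) * μ {ω | τ ω = n}
          ≤ ENNReal.ofReal ((S n) ^ 2) * ENNReal.ofReal (q ^ n) := by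
            rw [henorm n]; exact mul_le_mul_right h1 _
        _ = ENNReal.ofReal ((S n) ^ 2 * q ^ n) :=
            (ENNReal.ofReal_mul (sq_nonneg _)).symm
        _ ≤ ENNReal.ofReal (((n : ℝ) + 1) ^ 2 * c ^ n) := by
            apply ENNReal.ofReal_le_ofReal
            have hS2 : (S n) ^ 2 ≤ (((n : ℝ) + 1) * M ^ n) ^ 2 :=
              pow_le_pow_left₀ (hSnonneg n) (hSle n) 2
            calc (S n) ^ 2 * q ^ n ≤ (((n : ℝ) + 1) * M ^ n) ^ 2 * q ^ n :=
                  mul_le_mul_of_nonneg_right hS2 (pow_nonneg (le_of_lt hq0) n)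
              _ = ((n : ℝ) + 1) ^ 2 * c ^ n := by
                  rw [hc, mul_pow, mul_pow, ← pow_mul, ← pow_mul, mul_comm 2 n, pow_mul]
                  ring
    calc (∑' n : ℕ, (‖(S n) ^ 2‖₊ : ENNReal) * μ {ω | τ ω = n})
        ≤ ∑' n : ℕ, ENNReal.ofReal (((n : ℝ) + 1) ^ 2 * c ^ n) :=
          ENNReal.tsum_le_tsum hbound
      _ = ENNReal.ofReal (∑' n : ℕ, ((n : ℝ) + 1) ^ 2 * c ^ n) :=
          (ENNReal.ofReal_tsum_of_nonneg
            (fun n => mul_nonneg (sq_nonneg _) (pow_nonneg hc0 n)) hsummable).symm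
      _ < ⊤ := ENNReal.ofReal_lt_top
  · -- infinite variance case
    intro hgt hint
    have hfin : (∫⁻ ω, (‖(S (τ ω)) ^ 2‖₊ : ENNReal) ∂μ) < ⊤ := hint.2
    rw [hkey] at hfin
    set I : ℝ := (∑' n : ℕ, (‖(S n) ^ 2‖₊ : ENNReal) * μ {ω | τ ω = n}).toReal with hI
    -- lower bound for each term
    have hterm : ∀ n : ℕ, ENNReal.ofReal ((α ^ 2 / q) ^ n * (1 - q))
        ≤ (∑' n : ℕ, (‖(S n) ^ 2‖₊ : ENNReal) * μ {ω | τ ω = n}) := by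
      intro n
      refine le_trans ?_ (ENNReal.le_tsum n)
      rw [henorm n, hμeq n, ← ENNReal.ofReal_mul (sq_nonneg _)]
      apply ENNReal.ofReal_le_ofReal
      have hSge : (α / q) ^ n ≤ S n := by
        rw [hSrw n]
        exact Finset.single_le_sum (fun j _ => pow_nonneg hr0 j)
          (Finset.self_mem_range_succ n)
      have hS2 : ((α / q) ^ n) ^ 2 ≤ (S n) ^ 2 :=
        pow_le_pow_left₀ (pow_nonneg hr0 n) hSge 2
      have hqd : q ^ n - q ^ (n + 1) = q ^ n * (1 - q) := by ring
      have hrw : ((α / q) ^ n) ^ 2 * (q ^ n * (1 - q)) = (α ^ 2 / q) ^ n * (1 - q) := by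
        have hq0' : q ≠ 0 := ne_of_gt hq0
        have h' : ((α / q) ^ n) ^ 2 * q ^ n = (α ^ 2 / q) ^ n := by
          rw [← pow_mul, mul_comm n 2, pow_mul, ← mul_pow]
          congr 1
          rw [div_pow, div_mul_eq_mul_div, sq q, mul_div_mul_right _ _ hq0']
        rw [← mul_assoc, h']
      calc (α ^ 2 / q) ^ n * (1 - q) = ((α / q) ^ n) ^ 2 * (q ^ n * (1 - q)) := hrw.symm
        _ ≤ (S n) ^ 2 * (q ^ n * (1 - q)) := by
            apply mul_le_mul_of_nonneg_right hS2
            exact mul_nonneg (pow_nonneg (le_of_lt hq0) n) (by linarith)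
        _ = (S n) ^ 2 * (q ^ n - q ^ (n + 1)) := by rw [hqd]
    have hIbound : ∀ n : ℕ, (α ^ 2 / q) ^ n * (1 - q) ≤ I := by
      intro n
      rw [hI]
      refine ENNReal.toReal_mono (ne_of_lt hfin) (hterm n) |>.trans_eq' ?_
      rw [ENNReal.toReal_ofReal]
      exact mul_nonneg (pow_nonneg (by positivity) n) (by linarith)
    -- contradiction: (α²/q)^n unbounded
    have hone : (1 : ℝ) < α ^ 2 / q := (one_lt_div hq0).mpr hgt
    obtain ⟨n, hn⟩ := pow_unbounded_of_one_lt (I / (1 - q)) hone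
    have h1q : 0 < 1 - q := by linarith
    have := hIbound n
    rw [div_lt_iff₀ h1q] at hn
    linarith
end

section
/- Let (Ẑ_i)_{i≥1} be i.i.d. real random variables with E[Ẑ_1] = Z > 0, and let Z̃, c > 0. If E[|1 − c Ẑ_1/Z̃|] < 1, then the random series 1 + ∑_{n=1}^∞ ∏_{i=1}^n (1 − c Ẑ_i/Z̃) converges almost surely, is integrable, and its expectation equals 1 + ∑_{n=1}^∞ (1 − cZ/Z̃)^n = Z̃/(cZ). -/
open MeasureTheory ProbabilityTheory Filter
open scoped ENNReal NNReal

lemma prod_integral_aux {Ω : Type*} [MeasurableSpace Ω] (μ : Measure Ω) [IsProbabilityMeasure μ]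
    (Y : ℕ → Ω → ℝ) (hmeas : ∀ i, Measurable (Y i))
    (hindep : iIndepFun Y μ)
    (hid : ∀ i, IdentDistrib (Y i) (Y 0) μ μ)
    (hint : Integrable (Y 0) μ) (v : ℝ) (hv : ∫ ω, Y 0 ω ∂μ = v) :
    ∀ n, Integrable (fun ω => ∏ i ∈ Finset.range n, Y i ω) μ ∧
      ∫ ω, ∏ i ∈ Finset.range n, Y i ω ∂μ = v ^ n := by
  have hint' : ∀ i, Integrable (Y i) μ := fun i => (hid i).integrable_iff.mpr hint
  have hv' : ∀ i, ∫ ω, Y i ω ∂μ = v := fun i => (hid i).integral_eq.trans hv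
  intro n
  induction n with
  | zero => simp
  | succ n ih =>
    have hind : IndepFun (∏ j ∈ Finset.range n, Y j) (Y n) μ :=
      hindep.indepFun_prod_range_succ hmeas n
    have heq : (∏ j ∈ Finset.range n, Y j) = fun ω => ∏ j ∈ Finset.range n, Y j ω := by
      funext ω; simp [Finset.prod_apply]
    have hInt : Integrable ((∏ j ∈ Finset.range n, Y j) * Y n) μ := by
      refine hind.integrable_mul ?_ (hint' n)
      rw [heq]; exact ih.1
    have hmul := hind.integral_mul_eq_mul_integral (by rw [heq]; exact ih.1.aestronglyMeasurable) (hint' n).aestronglyMeasurable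
    constructor
    · have : (fun ω => ∏ i ∈ Finset.range (n+1), Y i ω) =
          (∏ j ∈ Finset.range n, Y j) * Y n := by
        funext ω; simp [Finset.prod_range_succ, Finset.prod_apply]
      rw [this]; exact hInt
    · calc ∫ ω, ∏ i ∈ Finset.range (n+1), Y i ω ∂μ
          = ∫ ω, ((∏ j ∈ Finset.range n, Y j) * Y n) ω ∂μ := by
            congr 1; funext ω; simp [Finset.prod_range_succ, Finset.prod_apply]
        _ = (∫ ω, (∏ j ∈ Finset.range n, Y j) ω ∂μ) * ∫ ω, Y n ω ∂μ := hmul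
        _ = v ^ n * v := by rw [hv' n]; congr 1; rw [heq] at *; exact ih.2
        _ = v ^ (n+1) := by ring

/-- The geometric series estimator built from i.i.d. unbiased estimates of the
normalising constant is a.s. finite, integrable and unbiased. -/
theorem geometric_series_estimator_unbiased
    {Ω : Type*} [MeasurableSpace Ω] (μ : Measure Ω) [IsProbabilityMeasure μ]
    (Zh : ℕ → Ω → ℝ) (hmeas : ∀ i, Measurable (Zh i))
    (hindep : iIndepFun Zh μ)
    (hid : ∀ i, IdentDistrib (Zh i) (Zh 0) μ μ)
    (Z Zt c : ℝ) (hZ : 0 < Z) (hZt : 0 < Zt) (hc : 0 < c)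
    (hint : Integrable (Zh 0) μ) (hmean : ∫ ω, Zh 0 ω ∂μ = Z)
    (hcontract : ∫ ω, |1 - c * Zh 0 ω / Zt| ∂μ < 1) :
    (∀ᵐ ω ∂μ, Summable (fun n : ℕ =>
        ∏ i ∈ Finset.range (n + 1), (1 - c * Zh i ω / Zt))) ∧
    Integrable (fun ω =>
        1 + ∑' n : ℕ, ∏ i ∈ Finset.range (n + 1), (1 - c * Zh i ω / Zt)) μ ∧
    (∫ ω, (1 + ∑' n : ℕ, ∏ i ∈ Finset.range (n + 1), (1 - c * Zh i ω / Zt)) ∂μ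
        = 1 + ∑' n : ℕ, (1 - c * Z / Zt) ^ (n + 1)) ∧
    1 + ∑' n : ℕ, (1 - c * Z / Zt) ^ (n + 1) = Zt / (c * Z) := by
  classical
  set Y : ℕ → Ω → ℝ := fun i ω => 1 - c * Zh i ω / Zt with hYdef
  have hg : Measurable (fun x : ℝ => 1 - c * x / Zt) :=
    measurable_const.sub ((measurable_id.const_mul c).div_const Zt)
  have hYmeas : ∀ i, Measurable (Y i) := fun i => hg.comp (hmeas i)
  have hYindep : iIndepFun Y μ :=
    hindep.comp (fun _ => fun x => 1 - c * x / Zt) (fun _ => hg)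
  have hYid : ∀ i, IdentDistrib (Y i) (Y 0) μ μ := fun i => (hid i).comp hg
  have hYint : Integrable (Y 0) μ :=
    (integrable_const 1).sub ((hint.const_mul c).div_const Zt)
  set q : ℝ := 1 - c * Z / Zt with hqdef
  have hq : ∫ ω, Y 0 ω ∂μ = q := by
    rw [hYdef]
    simp only []
    rw [integral_sub (integrable_const 1) ((hint.const_mul c).div_const Zt)]
    rw [integral_const, integral_div, integral_const_mul, hmean]
    simp [hqdef]
  set r : ℝ := ∫ ω, |Y 0 ω| ∂μ with hrdef
  have hr1 : r < 1 := hcontract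
  have hr0 : 0 ≤ r := integral_nonneg fun ω => abs_nonneg _
  have hqr : |q| ≤ r := by
    rw [← hq, hrdef]
    have := norm_integral_le_integral_norm (μ := μ) (f := Y 0)
    simpa [Real.norm_eq_abs] using this
  have hq1 : |q| < 1 := lt_of_le_of_lt hqr hr1
  -- absolute values
  have habs_meas : ∀ i, Measurable (fun ω => |Y i ω|) := fun i => (hYmeas i).abs
  have habs_indep : iIndepFun (fun i ω => |Y i ω|) μ :=
    hYindep.comp (fun _ => fun x : ℝ => |x|) (fun _ => measurable_abs)
  have habs_id : ∀ i, IdentDistrib (fun ω => |Y i ω|) (fun ω => |Y 0 ω|) μ μ :=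
    fun i => (hYid i).comp measurable_abs
  have habs_int : Integrable (fun ω => |Y 0 ω|) μ := hYint.abs
  have hkeyY := prod_integral_aux μ Y hYmeas hYindep hYid hYint q hq
  have hkeyA := prod_integral_aux μ (fun i ω => |Y i ω|) habs_meas habs_indep habs_id
    habs_int r rfl
  set P : ℕ → Ω → ℝ := fun n ω => ∏ i ∈ Finset.range (n+1), Y i ω with hPdef
  have hP_int : ∀ n, Integrable (P n) μ := fun n => (hkeyY (n+1)).1
  have hP_eq : ∀ n, ∫ ω, P n ω ∂μ = q ^ (n+1) := fun n => (hkeyY (n+1)).2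
  have hP_norm : ∀ n, ∫ ω, ‖P n ω‖ ∂μ = r ^ (n+1) := by
    intro n
    have := (hkeyA (n+1)).2
    rw [← this]
    congr 1; funext ω
    rw [hPdef]; simp [Real.norm_eq_abs, Finset.abs_prod]
  have hsum_r : Summable (fun n : ℕ => r ^ (n+1)) := by
    simpa [pow_succ] using (summable_geometric_of_lt_one hr0 hr1).mul_right r
  have hsum_norm : Summable fun n => ∫ ω, ‖P n ω‖ ∂μ := by
    have : (fun n => ∫ ω, ‖P n ω‖ ∂μ) = fun n => r ^ (n+1) := funext hP_norm
    rw [this]; exact hsum_r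
  -- a.e. summability
  have hlint : ∑' n, ∫⁻ ω, ‖P n ω‖₊ ∂μ ≠ ⊤ := by
    have h1 : ∀ n, ∫⁻ ω, ‖P n ω‖₊ ∂μ = ENNReal.ofReal (r ^ (n+1)) := by
      intro n
      simp_rw [← enorm_eq_nnnorm]
      rw [← ofReal_integral_norm_eq_lintegral_enorm (hP_int n), hP_norm n]
    simp_rw [h1]
    rw [← ENNReal.ofReal_tsum_of_nonneg (fun n => pow_nonneg hr0 _) hsum_r]
    exact ENNReal.ofReal_ne_top
  have hae : ∀ᵐ ω ∂μ, Summable fun n => ‖P n ω‖ := by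
    have hmeas' : ∀ n, AEMeasurable (fun ω => (‖P n ω‖₊ : ℝ≥0∞)) μ :=
      fun n => ((hP_int n).aestronglyMeasurable.enorm)
    rw [← lintegral_tsum hmeas'] at hlint
    filter_upwards [ae_lt_top' (AEMeasurable.ennreal_tsum hmeas') hlint] with ω hω
    have := ENNReal.tsum_coe_ne_top_iff_summable_coe.mp hω.ne
    simpa [coe_nnnorm] using this
  have haeP : ∀ᵐ ω ∂μ, Summable fun n => P n ω := by
    filter_upwards [hae] with ω hω using hω.of_norm
  refine ⟨haeP, ?_, ?_, ?_⟩
  · -- integrability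
    have hTsum : Integrable (fun ω => ∑' n, P n ω) μ := by
      constructor
      · refine aestronglyMeasurable_of_tendsto_ae atTop
          (f := fun N ω => ∑ n ∈ Finset.range N, P n ω)
          (fun N => (Finset.aestronglyMeasurable_fun_sum _
            (fun n _ => (hP_int n).aestronglyMeasurable))) ?_
        filter_upwards [haeP] with ω hω
        exact hω.hasSum.tendsto_sum_nat
      · show (∫⁻ ω, ‖∑' n, P n ω‖₊ ∂μ) < ⊤
        calc ∫⁻ ω, ‖∑' n, P n ω‖₊ ∂μ
            ≤ ∫⁻ ω, ∑' n, (‖P n ω‖₊ : ℝ≥0∞) ∂μ := by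
              refine lintegral_mono_ae ?_
              filter_upwards [hae] with ω hω
              calc (‖∑' n, P n ω‖₊ : ℝ≥0∞)
                  ≤ ENNReal.ofReal (∑' n, ‖P n ω‖) := by
                    rw [← enorm_eq_nnnorm, ← ofReal_norm]
                    exact ENNReal.ofReal_le_ofReal (norm_tsum_le_tsum_norm hω)
                _ = ∑' n, (‖P n ω‖₊ : ℝ≥0∞) := by
                    rw [ENNReal.ofReal_tsum_of_nonneg (fun n => norm_nonneg _) hω]
                    congr 1; funext n; rw [ofReal_norm, enorm_eq_nnnorm]
          _ = ∑' n, ∫⁻ ω, ‖P n ω‖₊ ∂μ := lintegral_tsum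
              (fun n => (hP_int n).aestronglyMeasurable.enorm)
          _ < ⊤ := hlint.lt_top
    exact (integrable_const 1).add hTsum
  · -- integral value
    have hTsum : Integrable (fun ω => ∑' n, P n ω) μ := by
      constructor
      · refine aestronglyMeasurable_of_tendsto_ae atTop
          (f := fun N ω => ∑ n ∈ Finset.range N, P n ω)
          (fun N => (Finset.aestronglyMeasurable_fun_sum _
            (fun n _ => (hP_int n).aestronglyMeasurable))) ?_
        filter_upwards [haeP] with ω hω
        exact hω.hasSum.tendsto_sum_nat
      · show (∫⁻ ω, ‖∑' n, P n ω‖₊ ∂μ) < ⊤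
        calc ∫⁻ ω, ‖∑' n, P n ω‖₊ ∂μ
            ≤ ∫⁻ ω, ∑' n, (‖P n ω‖₊ : ℝ≥0∞) ∂μ := by
              refine lintegral_mono_ae ?_
              filter_upwards [hae] with ω hω
              calc (‖∑' n, P n ω‖₊ : ℝ≥0∞)
                  ≤ ENNReal.ofReal (∑' n, ‖P n ω‖) := by
                    rw [← enorm_eq_nnnorm, ← ofReal_norm]
                    exact ENNReal.ofReal_le_ofReal (norm_tsum_le_tsum_norm hω)
                _ = ∑' n, (‖P n ω‖₊ : ℝ≥0∞) := by
                    rw [ENNReal.ofReal_tsum_of_nonneg (fun n => norm_nonneg _) hω]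
                    congr 1; funext n; rw [ofReal_norm, enorm_eq_nnnorm]
          _ = ∑' n, ∫⁻ ω, ‖P n ω‖₊ ∂μ := lintegral_tsum
              (fun n => (hP_int n).aestronglyMeasurable.enorm)
          _ < ⊤ := hlint.lt_top
    rw [integral_add (integrable_const 1) hTsum, integral_const]
    simp only [probReal_univ, measure_univ, ENNReal.toReal_one, smul_eq_mul, one_mul]
    congr 1
    rw [← integral_tsum_of_summable_integral_norm hP_int hsum_norm]
    exact tsum_congr fun n => hP_eq n
  · -- geometric sum value
    have h1q : 1 - q = c * Z / Zt := by rw [hqdef]; ring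
    have hne : 1 - q ≠ 0 := by
      rw [h1q]; positivity
    have hsumq : Summable (fun n : ℕ => q ^ n) :=
      summable_geometric_of_norm_lt_one (by rwa [Real.norm_eq_abs])
    have : ∑' n : ℕ, q ^ (n+1) = q * (1 - q)⁻¹ := by
      calc ∑' n : ℕ, q ^ (n+1) = ∑' n : ℕ, q * q ^ n := by
            exact tsum_congr fun n => by ring
        _ = q * ∑' n : ℕ, q ^ n := hsumq.tsum_mul_left q
        _ = q * (1 - q)⁻¹ := by
            rw [tsum_geometric_of_norm_lt_one (by rwa [Real.norm_eq_abs])]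
    rw [this]
    have h2 : 1 + q * (1 - q)⁻¹ = (1 - q)⁻¹ := by
      field_simp
      ring
    rw [h2, h1q, inv_div]
end

section
/- Let X be a real random variable with E[X²] < ∞ and E[X] = Z > 0, and let Z̃, c > 0. If 0 < c < 2 Z̃ Z / E[X²], then E[|1 − cX/Z̃|] < 1. -/
open MeasureTheory

/-- A sufficient condition for the geometric-series contraction property
`E|1 - cX/Z̃| < 1`. -/
theorem contraction_condition
    {Ω : Type*} [MeasurableSpace Ω] (μ : Measure Ω) [IsProbabilityMeasure μ]
    (X : Ω → ℝ) (hX2 : Integrable (fun ω => (X ω) ^ 2) μ) (hX : Integrable X μ)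
    (Z Zt c : ℝ) (hZ : 0 < Z) (hmean : ∫ ω, X ω ∂μ = Z)
    (hZt : 0 < Zt) (hc : 0 < c)
    (hcc : c < 2 * Zt * Z / ∫ ω, (X ω) ^ 2 ∂μ) :
    ∫ ω, |1 - c * X ω / Zt| ∂μ < 1 := by
  set I2 := ∫ ω, (X ω) ^ 2 ∂μ with hI2def
  have hI2nn : 0 ≤ I2 := integral_nonneg fun ω => sq_nonneg _
  have hI2pos : 0 < I2 := by
    rcases hI2nn.lt_or_eq with h | h
    · exact h
    · exfalso
      rw [← h, div_zero] at hcc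
      linarith
  have key : c * I2 < 2 * Zt * Z := (lt_div_iff₀ hI2pos).mp hcc
  set Y : Ω → ℝ := fun ω => 1 - c * X ω / Zt with hYdef
  have hexpand : (fun ω => Y ω ^ 2)
      = fun ω => 1 - 2 * (c / Zt) * X ω + (c / Zt) ^ 2 * X ω ^ 2 := by
    funext ω
    simp only [hYdef]
    field_simp
    ring
  have hY2int : Integrable (fun ω => Y ω ^ 2) μ := by
    rw [hexpand]
    exact ((integrable_const (1 : ℝ)).sub (hX.const_mul _)).add (hX2.const_mul _)
  have hYint : Integrable Y μ :=
    (integrable_const (1 : ℝ)).sub ((hX.const_mul c).div_const Zt)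
  have hEY2 : ∫ ω, Y ω ^ 2 ∂μ = 1 - 2 * (c / Zt) * Z + (c / Zt) ^ 2 * I2 := by
    rw [hexpand]
    have hA : Integrable (fun ω => 1 - 2 * (c / Zt) * X ω) μ :=
      (integrable_const (1 : ℝ)).sub (hX.const_mul _)
    have hB : Integrable (fun ω => (c / Zt) ^ 2 * X ω ^ 2) μ := hX2.const_mul _
    have hC : Integrable (fun ω => 2 * (c / Zt) * X ω) μ := hX.const_mul _
    rw [integral_add hA hB, integral_sub (integrable_const (1 : ℝ)) hC,
      integral_const_mul, integral_const_mul, hmean, ← hI2def]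
    simp
  have hEY2lt : ∫ ω, Y ω ^ 2 ∂μ < 1 := by
    rw [hEY2]
    have h1 : c * (c * I2) < c * (2 * Zt * Z) := mul_lt_mul_of_pos_left key hc
    have h2 : (c / Zt) ^ 2 * I2 < 2 * (c / Zt) * Z := by
      have e1 : (c / Zt) ^ 2 * I2 = c * (c * I2) / Zt ^ 2 := by ring
      have e2 : 2 * (c / Zt) * Z = c * (2 * Zt * Z) / Zt ^ 2 := by
        field_simp
      rw [e1, e2]
      gcongr
    linarith
  have hYm : MemLp Y 2 μ := by
    rw [memLp_two_iff_integrable_sq hYint.aestronglyMeasurable]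
    exact hY2int
  have habsm : MemLp (fun ω => |Y ω|) 2 μ := hYm.abs
  have hvar := ProbabilityTheory.variance_nonneg (fun ω => |Y ω|) μ
  rw [ProbabilityTheory.variance_eq_sub habsm] at hvar
  have hsq : (fun ω => |Y ω| ^ 2) = fun ω => Y ω ^ 2 := by
    funext ω; exact sq_abs _
  have habsint : 0 ≤ ∫ ω, |Y ω| ∂μ := integral_nonneg fun ω => abs_nonneg _
  have hle : (∫ ω, |Y ω| ∂μ) ^ 2 ≤ ∫ ω, Y ω ^ 2 ∂μ := by
    have := hvar
    simp only [Pi.pow_apply, sq_abs] at this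
    linarith [this]
  have : ∫ ω, |Y ω| ∂μ < 1 := by nlinarith
  simpa [hYdef] using this
end

section
/- Let (Ẑ_i)_{i≥1} be i.i.d. integrable real random variables with E[Ẑ_1] = Z, let Z̃ ∈ ℝ and ν > 0. Then the random series 1 + ∑_{n=1}^∞ (ν^n/n!) ∏_{i=1}^n (Z̃ − Ẑ_i) converges almost surely, is integrable, and its expectation equals exp(ν(Z̃ − Z)); consequently exp(−νZ̃) times this series is an unbiased estimator of exp(−νZ). -/
open MeasureTheory ProbabilityTheory Filter

lemma iid_prod_integral
    {Ω : Type*} [MeasurableSpace Ω] (μ : Measure Ω) [IsProbabilityMeasure μ]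
    (g : ℕ → Ω → ℝ) (hgm : ∀ i, Measurable (g i))
    (hgi : iIndepFun g μ)
    (hgint : ∀ i, Integrable (g i) μ) (c : ℝ) (hgc : ∀ i, ∫ ω, g i ω ∂μ = c) :
    ∀ n, Integrable (fun ω => ∏ i ∈ Finset.range n, g i ω) μ ∧
      (∫ ω, ∏ i ∈ Finset.range n, g i ω ∂μ = c ^ n) := by
  intro n
  induction n with
  | zero => simp
  | succ n ih =>
    have hInd : IndepFun (fun ω => ∏ i ∈ Finset.range n, g i ω) (g n) μ := by
      have := hgi.indepFun_prod_range_succ hgm n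
      have heq : (∏ i ∈ Finset.range n, g i) = fun ω => ∏ i ∈ Finset.range n, g i ω := by
        funext ω; simp
      rwa [heq] at this
    have hint' : Integrable ((fun ω => ∏ i ∈ Finset.range n, g i ω) * g n) μ :=
      hInd.integrable_mul ih.1 (hgint n)
    have heq2 : ((fun ω => ∏ i ∈ Finset.range n, g i ω) * g n)
        = fun ω => ∏ i ∈ Finset.range (n + 1), g i ω := by
      funext ω; simp [Finset.prod_range_succ]
    constructor
    · rwa [heq2] at hint'
    · have h := hInd.integral_mul_eq_mul_integral ih.1.aestronglyMeasurable (hgint n).aestronglyMeasurable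
      rw [heq2] at h
      rw [h, ih.2, hgc n, pow_succ]


/-- The exponential (Poisson-type) series estimator built from i.i.d. unbiased
estimates of `Z` is a.s. convergent, integrable, with expectation
`exp(ν(Z̃ - Z))`; hence `exp(-νZ̃)` times the series is unbiased for `exp(-νZ)`. -/
theorem exponential_series_estimator_unbiased
    {Ω : Type*} [MeasurableSpace Ω] (μ : Measure Ω) [IsProbabilityMeasure μ]
    (Zh : ℕ → Ω → ℝ) (hmeas : ∀ i, Measurable (Zh i))
    (hindep : iIndepFun Zh μ)
    (hid : ∀ i, IdentDistrib (Zh i) (Zh 0) μ μ)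
    (Z Zt ν : ℝ) (hν : 0 < ν)
    (hint : Integrable (Zh 0) μ) (hmean : ∫ ω, Zh 0 ω ∂μ = Z) :
    (∀ᵐ ω ∂μ, Summable (fun n : ℕ =>
        ν ^ (n + 1) / (Nat.factorial (n + 1) : ℝ) *
          ∏ i ∈ Finset.range (n + 1), (Zt - Zh i ω))) ∧
    Integrable (fun ω =>
        1 + ∑' n : ℕ, ν ^ (n + 1) / (Nat.factorial (n + 1) : ℝ) *
          ∏ i ∈ Finset.range (n + 1), (Zt - Zh i ω)) μ ∧
    (∫ ω, (1 + ∑' n : ℕ, ν ^ (n + 1) / (Nat.factorial (n + 1) : ℝ) *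
          ∏ i ∈ Finset.range (n + 1), (Zt - Zh i ω)) ∂μ
        = Real.exp (ν * (Zt - Z))) ∧
    (∫ ω, Real.exp (-ν * Zt) *
        (1 + ∑' n : ℕ, ν ^ (n + 1) / (Nat.factorial (n + 1) : ℝ) *
          ∏ i ∈ Finset.range (n + 1), (Zt - Zh i ω)) ∂μ
        = Real.exp (-ν * Z)) := by
  -- the centered variables
  set Y : ℕ → Ω → ℝ := fun i ω => Zt - Zh i ω with hYdef
  have hYmeas : ∀ i, Measurable (Y i) := fun i => measurable_const.sub (hmeas i)
  have hYindep : iIndepFun Y μ :=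
    hindep.comp (fun _ x => Zt - x) (fun _ => measurable_const.sub measurable_id)
  have hYid : ∀ i, IdentDistrib (Y i) (Y 0) μ μ :=
    fun i => (hid i).comp (measurable_const.sub measurable_id)
  have hY0int : Integrable (Y 0) μ := (integrable_const Zt).sub hint
  have hYint : ∀ i, Integrable (Y i) μ := fun i => (hYid i).integrable_iff.2 hY0int
  have hYmean : ∀ i, ∫ ω, Y i ω ∂μ = Zt - Z := by
    intro i
    rw [(hYid i).integral_eq]
    have : ∫ ω, Y 0 ω ∂μ = (∫ _ω, Zt ∂μ) - ∫ ω, Zh 0 ω ∂μ :=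
      integral_sub (integrable_const Zt) hint
    simp [this, hmean]
  -- absolute values
  set B : ℕ → Ω → ℝ := fun i ω => |Zt - Zh i ω| with hBdef
  have hBmeas : ∀ i, Measurable (B i) := fun i => (hYmeas i).abs
  have hBindep : iIndepFun B μ :=
    hindep.comp (fun _ x => |Zt - x|) (fun _ => (measurable_const.sub measurable_id).abs)
  have hBid : ∀ i, IdentDistrib (B i) (B 0) μ μ :=
    fun i => (hid i).comp (measurable_const.sub measurable_id).abs
  have hBint : ∀ i, Integrable (B i) μ := fun i => (hBid i).integrable_iff.2 hY0int.abs
  set A : ℝ := ∫ ω, B 0 ω ∂μ with hAdef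
  have hBmean : ∀ i, ∫ ω, B i ω ∂μ = A := fun i => (hBid i).integral_eq
  have hA0 : 0 ≤ A := integral_nonneg fun ω => abs_nonneg _
  have hP := iid_prod_integral μ Y hYmeas hYindep hYint (Zt - Z) hYmean
  have hQ := iid_prod_integral μ B hBmeas hBindep hBint A hBmean
  -- the terms
  set F : ℕ → Ω → ℝ := fun n ω =>
    ν ^ (n + 1) / (Nat.factorial (n + 1) : ℝ) * ∏ i ∈ Finset.range (n + 1), (Zt - Zh i ω)
    with hFdef
  set c : ℕ → ℝ := fun n => ν ^ (n + 1) / (Nat.factorial (n + 1) : ℝ) with hcdef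
  have hc0 : ∀ n, 0 ≤ c n := fun n => by positivity
  have hFmeas : ∀ n, Measurable (F n) :=
    fun n => measurable_const.mul (Finset.measurable_prod _ fun i _ => hYmeas i)
  have hFint : ∀ n, Integrable (F n) μ := fun n => (hP (n + 1)).1.const_mul _
  have hFnorm : ∀ n ω, ‖F n ω‖ = c n * ∏ i ∈ Finset.range (n + 1), B i ω := by
    intro n ω
    rw [Real.norm_eq_abs, hFdef, abs_mul, abs_of_nonneg (hc0 n), Finset.abs_prod]
  have hFnormint : ∀ n, ∫ ω, ‖F n ω‖ ∂μ = c n * A ^ (n + 1) := by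
    intro n
    simp_rw [hFnorm]
    rw [integral_const_mul, (hQ (n + 1)).2]
  -- summability of the norms
  have hsum : Summable (fun n => c n * A ^ (n + 1)) := by
    have h1 : Summable (fun n : ℕ => (ν * A) ^ n / (Nat.factorial n : ℝ)) :=
      Real.summable_pow_div_factorial _
    have h2 := h1.comp_injective (add_left_injective 1)
    refine h2.congr fun n => ?_
    simp only [Function.comp]
    rw [hcdef, mul_pow, div_mul_eq_mul_div]
  have hsumF : Summable (fun n => ∫ ω, ‖F n ω‖ ∂μ) := by
    simpa only [hFnormint] using hsum
  -- lintegral computations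
  have hlin : ∀ n, ∫⁻ ω, ENNReal.ofReal ‖F n ω‖ ∂μ = ENNReal.ofReal (∫ ω, ‖F n ω‖ ∂μ) :=
    fun n => (ofReal_integral_eq_lintegral_ofReal (hFint n).norm
      (Eventually.of_forall fun ω => norm_nonneg _)).symm
  have htop : ∑' n, ∫⁻ ω, ENNReal.ofReal ‖F n ω‖ ∂μ ≠ ⊤ := by
    simp_rw [hlin]
    rw [← ENNReal.ofReal_tsum_of_nonneg (fun n => integral_nonneg fun ω => norm_nonneg _) hsumF]
    exact ENNReal.ofReal_ne_top
  have hGmeas : ∀ n, Measurable (fun ω => ENNReal.ofReal ‖F n ω‖) :=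
    fun n => (hFmeas n).norm.ennreal_ofReal
  have hae : ∀ᵐ ω ∂μ, Summable (fun n => ‖F n ω‖) := by
    have hlt : ∀ᵐ ω ∂μ, ∑' n, ENNReal.ofReal ‖F n ω‖ < ⊤ := by
      refine ae_lt_top (Measurable.ennreal_tsum hGmeas) ?_
      rwa [lintegral_tsum fun n => (hGmeas n).aemeasurable]
    filter_upwards [hlt] with ω hω
    have := ENNReal.summable_toReal hω.ne
    refine this.congr fun n => ?_
    rw [ENNReal.toReal_ofReal (norm_nonneg _)]
  have haeF : ∀ᵐ ω ∂μ, Summable (fun n => F n ω) := by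
    filter_upwards [hae] with ω hω using hω.of_norm
  -- integrability of the tsum
  have hTmeas : AEStronglyMeasurable (fun ω => ∑' n, F n ω) μ := by
    refine aestronglyMeasurable_of_tendsto_ae atTop
      (fun N => (Finset.measurable_sum (Finset.range N) fun n _ =>
        hFmeas n).aestronglyMeasurable) ?_
    filter_upwards [haeF] with ω hω
    exact hω.hasSum.tendsto_sum_nat
  have hTint : Integrable (fun ω => ∑' n, F n ω) μ := by
    refine ⟨hTmeas, ?_⟩
    rw [hasFiniteIntegral_iff_norm]
    calc ∫⁻ ω, ENNReal.ofReal ‖∑' n, F n ω‖ ∂μ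
        ≤ ∫⁻ ω, ∑' n, ENNReal.ofReal ‖F n ω‖ ∂μ := by
          refine lintegral_mono_ae ?_
          filter_upwards [hae] with ω hω
          calc ENNReal.ofReal ‖∑' n, F n ω‖
              ≤ ENNReal.ofReal (∑' n, ‖F n ω‖) :=
                ENNReal.ofReal_le_ofReal (norm_tsum_le_tsum_norm hω)
            _ = ∑' n, ENNReal.ofReal ‖F n ω‖ :=
                ENNReal.ofReal_tsum_of_nonneg (fun n => norm_nonneg _) hω
      _ = ∑' n, ∫⁻ ω, ENNReal.ofReal ‖F n ω‖ ∂μ :=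
          lintegral_tsum fun n => (hGmeas n).aemeasurable
      _ < ⊤ := htop.lt_top
  -- integral of the tsum
  have hIT : ∫ ω, ∑' n, F n ω ∂μ = ∑' n, c n * (Zt - Z) ^ (n + 1) := by
    rw [← integral_tsum_of_summable_integral_norm hFint hsumF]
    congr 1
    funext n
    rw [hFdef]
    simp only
    rw [integral_const_mul, (hP (n + 1)).2]
  -- the exponential identity
  have hexp : 1 + ∑' n, c n * (Zt - Z) ^ (n + 1) = Real.exp (ν * (Zt - Z)) := by
    have hs : Summable (fun n : ℕ => (ν * (Zt - Z)) ^ n / (Nat.factorial n : ℝ)) :=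
      Real.summable_pow_div_factorial _
    have hexp0 : Real.exp (ν * (Zt - Z))
        = ∑' n : ℕ, (ν * (Zt - Z)) ^ n / (Nat.factorial n : ℝ) := by
      rw [Real.exp_eq_exp_ℝ, NormedSpace.exp_eq_tsum_div]
    rw [hexp0, hs.tsum_eq_zero_add]
    simp only [pow_zero, Nat.factorial_zero, Nat.cast_one, div_one]
    congr 1
    refine (tsum_congr fun n => ?_)
    rw [hcdef]
    simp only
    rw [mul_pow, div_mul_eq_mul_div]
  -- the main series function
  have hSint : Integrable (fun ω => 1 + ∑' n, F n ω) μ := (integrable_const 1).add hTint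
  have hSval : ∫ ω, (1 + ∑' n, F n ω) ∂μ = Real.exp (ν * (Zt - Z)) := by
    rw [integral_add (integrable_const 1) hTint, integral_const]
    simp only [measure_univ, probReal_univ, ENNReal.toReal_one, smul_eq_mul, one_mul]
    rw [hIT, hexp]
  refine ⟨haeF, hSint, hSval, ?_⟩
  rw [integral_const_mul, hSval, ← Real.exp_add]
  ring_nf
end
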